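/- In the setting of the Dehornoy-type inductive limit (functions k, l : ℤ → ℤ with k(n), l(n) ≥ 2, presented group G̃ with generators gₙ (n ∈ ℤ) and relations g_{n-1}^{k(n)} = g_n^{l(n)}, elements a_{i,m}, subsemigroup P̃, subgroups G_(m), and P_(m) := P̃ ∩ G_(m)): for every m ≥ 0, every subgroup C of G_(m+1) that is convex with respect to P_(m+1) and contains a_{m,m} also contains g_j for every j with -m-1 ≤ j ≤ m+1; in particular it contains g_{m+1} and hence the subgroup generated by g_{m+1}^{k(m+2)}. -/
import Mathlib

/-- The relators `g_{n-1}^{k n} * g_n^{-(l n)}` of the Dehornoy-type inductive limit. -/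
def dehornoyRels (k l : ℤ → ℤ) : Set (FreeGroup ℤ) :=
  {r | ∃ n : ℤ, r = FreeGroup.of (n - 1) ^ k n * FreeGroup.of n ^ (-(l n))}

/-- The presented group `G̃` with generators `gₙ (n : ℤ)` and relations
`g_{n-1}^{k n} = g_n^{l n}`. -/
abbrev Gtil (k l : ℤ → ℤ) : Type := PresentedGroup (dehornoyRels k l)

/-- The image `gₙ` in `G̃` of the `n`-th generator. -/
def gg (k l : ℤ → ℤ) (n : ℤ) : Gtil k l := PresentedGroup.of n

/-- The element `a_{i,m} = g_{-m}^{-(k(-m+1)-1)} ⋯ g_{i-1}^{-(k i - 1)} * g_i` of `G̃`. -/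
def aElt (k l : ℤ → ℤ) (i m : ℤ) : Gtil k l :=
  (((List.range (i + m).toNat).map
      (fun t => gg k l (-m + (t : ℤ)) ^ (-(k (-m + (t : ℤ) + 1) - 1)))).prod) * gg k l i

/-- The generating set `{a_{i,m} : m ≥ 0, -m ≤ i ≤ m}` of the positive cone. -/
def aGenSet (k l : ℤ → ℤ) : Set (Gtil k l) :=
  {x | ∃ m i : ℤ, 0 ≤ m ∧ -m ≤ i ∧ i ≤ m ∧ x = aElt k l i m}

/-- The subsemigroup `P̃` of `G̃` generated by the `a_{i,m}`, viewed as a set. -/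
def Ptil (k l : ℤ → ℤ) : Set (Gtil k l) :=
  (Subsemigroup.closure (aGenSet k l) : Subsemigroup (Gtil k l))

/-- The subgroup `G_(m)` of `G̃` generated by `g_{-m}, …, g_m`. -/
def Gsub (k l : ℤ → ℤ) (m : ℤ) : Subgroup (Gtil k l) :=
  Subgroup.closure {x | ∃ j : ℤ, -m ≤ j ∧ j ≤ m ∧ x = gg k l j}

/-- `P` is a positive cone of the group `G`: it is closed under multiplication and
`G` is the disjoint union of `P`, `P⁻¹` and `{1}`. -/
def IsPositiveCone {G : Type*} [Group G] (P : Set G) : Prop :=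
  (∀ a ∈ P, ∀ b ∈ P, a * b ∈ P) ∧
  (∀ g : G, g ∈ P ∨ g⁻¹ ∈ P ∨ g = 1) ∧
  (∀ g ∈ P, g⁻¹ ∉ P) ∧ (1 : G) ∉ P

/-- `C` is a subgroup of `H` which is convex with respect to the set `Q`
(a positive cone of `H`): whenever `c₁, c₂ ∈ C` and `g ∈ H` satisfy
`c₁⁻¹ * g ∈ Q ∪ {1}` and `g⁻¹ * c₂ ∈ Q ∪ {1}`, then `g ∈ C`. -/
def IsConvexIn {G : Type*} [Group G] (H : Subgroup G) (Q : Set G) (C : Subgroup G) : Prop :=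
  C ≤ H ∧ ∀ c₁ ∈ C, ∀ c₂ ∈ C, ∀ g ∈ H,
    c₁⁻¹ * g ∈ Q ∪ {1} → g⁻¹ * c₂ ∈ Q ∪ {1} → g ∈ C

/- ### Auxiliary lemmas -/

lemma gg_rel (k l : ℤ → ℤ) (n : ℤ) : gg k l (n - 1) ^ k n = gg k l n ^ l n := by
  have h : (PresentedGroup.mk (dehornoyRels k l))
      (FreeGroup.of (n - 1) ^ k n * FreeGroup.of n ^ (-(l n))) = 1 := by
    apply (QuotientGroup.eq_one_iff _).mpr
    exact Subgroup.subset_normalClosure ⟨n, rfl⟩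
  rw [map_mul, map_zpow, map_zpow] at h
  have h2 : gg k l (n-1) ^ k n * gg k l n ^ (-(l n)) = 1 := h
  rw [zpow_neg] at h2
  exact (mul_inv_eq_one).mp h2

lemma coeM_eq_list (L : List ℕ) :
    (do let a ← L; pure (↑a) : List ℤ) = L.map (Nat.cast) := by
  induction L with
  | nil => rfl
  | cons a L ih => simpa using ih

lemma aElt_def' (k l : ℤ → ℤ) (i m : ℤ) :
    aElt k l i m = ((List.range (i + m).toNat).map
      (fun t : ℕ => gg k l (-m + (t : ℤ)) ^ (-(k (-m + (t : ℤ) + 1) - 1)))).prod * gg k l i := by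
  unfold aElt; rw [coeM_eq_list, List.map_map]; rfl

lemma aElt_base (k l : ℤ → ℤ) (m : ℤ) : aElt k l (-m) m = gg k l (-m) := by
  rw [aElt_def']
  rw [show (-m + m).toNat = 0 by omega, List.range_zero, List.map_nil, List.prod_nil, one_mul]

lemma aElt_succ (k l : ℤ → ℤ) (i m : ℤ) (h : 0 ≤ i + m) :
    aElt k l (i + 1) m = aElt k l i m * gg k l i ^ (-(k (i + 1))) * gg k l (i + 1) := by
  rw [aElt_def', aElt_def']
  have h1 : (i + 1 + m).toNat = (i + m).toNat + 1 := by omega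
  rw [h1, List.range_succ, List.map_append, List.prod_append]
  have h2 : ((i + m).toNat : ℤ) = i + m := Int.toNat_of_nonneg h
  simp only [List.map_cons, List.map_nil, List.prod_cons, List.prod_nil, mul_one]
  rw [h2, show -m + (i + m) = i by ring]
  rw [show (-(k (i + 1) - 1)) = 1 + -(k (i + 1)) by ring, zpow_add, zpow_one]
  group

lemma aElt_shift (k l : ℤ → ℤ) (i m : ℤ) (h : 0 ≤ i + m) :
    aElt k l i (m + 1) = gg k l (-(m + 1)) ^ (-(k (-m) - 1)) * aElt k l i m := by
  rw [aElt_def', aElt_def']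
  have h1 : (i + (m + 1)).toNat = (i + m).toNat + 1 := by omega
  rw [h1, List.range_succ_eq_map, List.map_cons, List.prod_cons, List.map_map, mul_assoc]
  have hhead : gg k l (-(m+1) + ((0:ℕ):ℤ)) ^ (-(k (-(m+1) + ((0:ℕ):ℤ) + 1) - 1))
      = gg k l (-(m+1)) ^ (-(k (-m) - 1)) := by norm_num
  have hmap : ((fun t : ℕ => gg k l (-(m+1) + (t:ℤ)) ^ (-(k (-(m+1) + (t:ℤ) + 1) - 1))) ∘ Nat.succ)
      = (fun t : ℕ => gg k l (-m + (t:ℤ)) ^ (-(k (-m + (t:ℤ) + 1) - 1))) := by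
    funext t
    simp only [Function.comp_apply, Nat.cast_succ]
    rw [show -(m+1) + ((t:ℤ)+1) = -m + t by ring]
  rw [hhead, hmap]

lemma aElt_mem_aGenSet (k l : ℤ → ℤ) {M i : ℤ} (hM : 0 ≤ M) (h1 : -M ≤ i) (h2 : i ≤ M) :
    aElt k l i M ∈ aGenSet k l := ⟨M, i, hM, h1, h2, rfl⟩

lemma cl_zpow (k l : ℤ → ℤ) {x : Gtil k l} (hx : x ∈ Subsemigroup.closure (aGenSet k l))
    {E : ℤ} (hE : 1 ≤ E) : x ^ E ∈ Subsemigroup.closure (aGenSet k l) := by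
  have key : ∀ n : ℕ, x ^ (n + 1) ∈ Subsemigroup.closure (aGenSet k l) := by
    intro n
    induction n with
    | zero => simpa using hx
    | succ n ih => rw [pow_succ]; exact Subsemigroup.mul_mem _ ih hx
  have hE' : E = ((E.toNat - 1 : ℕ) + 1 : ℕ) := by omega
  rw [hE', zpow_natCast]
  exact key _

lemma gg_mem_Gsub (k l : ℤ → ℤ) {M j : ℤ} (h1 : -M ≤ j) (h2 : j ≤ M) :
    gg k l j ∈ Gsub k l M :=
  Subgroup.subset_closure ⟨j, h1, h2, rfl⟩

lemma aElt_mem_Gsub (k l : ℤ → ℤ) {M i : ℤ} (hM : 0 ≤ M) (h1 : -M ≤ i) (h2 : i ≤ M) :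
    aElt k l i M ∈ Gsub k l M := by
  have key : ∀ d : ℕ, -M + (d:ℤ) ≤ M → aElt k l (-M + d) M ∈ Gsub k l M := by
    intro d
    induction d with
    | zero =>
      intro _
      rw [Nat.cast_zero, add_zero, aElt_base]
      exact gg_mem_Gsub k l (le_refl _) (by omega)
    | succ d ih =>
      intro hd1
      have hd0 : -M + (d:ℤ) ≤ M := by push_cast at hd1 ⊢; omega
      have hcast : -M + ((d+1 : ℕ) : ℤ) = (-M + d) + 1 := by push_cast; ring
      rw [hcast, aElt_succ k l _ M (by omega)]
      exact mul_mem (mul_mem (ih hd0)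
        (zpow_mem (gg_mem_Gsub k l (by omega) (by push_cast at hd1; omega)) _))
        (gg_mem_Gsub k l (by omega) (by push_cast at hd1 ⊢; omega))
  have : i = -M + ((i + M).toNat : ℤ) := by omega
  rw [this]
  exact key _ (by omega)

lemma gg_mem_cl (k l : ℤ → ℤ) (hk : ∀ n : ℤ, 2 ≤ k n) {M : ℤ} (hM : 0 ≤ M)
    {j : ℤ} (h1 : -M ≤ j) (h2 : j ≤ M) :
    gg k l j ∈ Subsemigroup.closure (aGenSet k l) := by
  set cl := Subsemigroup.closure (aGenSet k l) with hcl
  have key : ∀ d : ℕ, -M + (d:ℤ) ≤ M →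
      (gg k l (-M + d) * (aElt k l (-M + d) M)⁻¹ ∈ (cl : Set (Gtil k l)) ∪ {1}) ∧
        gg k l (-M + d) ∈ cl := by
    intro d
    induction d with
    | zero =>
      intro _
      rw [Nat.cast_zero, add_zero]
      constructor
      · right
        rw [Set.mem_singleton_iff, aElt_base, mul_inv_cancel]
      · exact Subsemigroup.subset_closure
          (aElt_base k l M ▸ aElt_mem_aGenSet k l hM (le_refl _) (by omega))
    | succ d ih =>
      intro hd1
      have hd0 : -M + (d:ℤ) ≤ M := by push_cast at hd1 ⊢; omega
      obtain ⟨ihp, ihg⟩ := ih hd0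
      set j0 : ℤ := -M + d with hj0
      have hcast : -M + ((d+1 : ℕ) : ℤ) = j0 + 1 := by push_cast; ring
      rw [hcast]
      have hsucc := aElt_succ k l j0 M (by omega)
      have hpinv : gg k l (j0+1) * (aElt k l (j0+1) M)⁻¹
          = gg k l j0 ^ (k (j0+1) - 1) * (gg k l j0 * (aElt k l j0 M)⁻¹) := by
        rw [hsucc, show k (j0+1) - 1 = -(-(k (j0+1))) - 1 by ring]
        group
      have hpow : gg k l j0 ^ (k (j0+1) - 1) ∈ cl :=
        cl_zpow k l ihg (by have := hk (j0+1); omega)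
      have hpmem : gg k l (j0+1) * (aElt k l (j0+1) M)⁻¹ ∈ cl := by
        rw [hpinv]
        rcases ihp with hin | hone
        · exact Subsemigroup.mul_mem _ hpow hin
        · rw [Set.mem_singleton_iff] at hone
          rw [hone, mul_one]
          exact hpow
      constructor
      · exact Set.mem_union_left _ hpmem
      · have hid : gg k l (j0+1)
            = (gg k l (j0+1) * (aElt k l (j0+1) M)⁻¹) * aElt k l (j0+1) M := by group
        rw [hid]
        exact Subsemigroup.mul_mem _ hpmem (Subsemigroup.subset_closure
          (aElt_mem_aGenSet k l hM (by omega) (by push_cast at hd1 ⊢; omega)))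
  have hj : j = -M + ((j + M).toNat : ℤ) := by omega
  rw [hj]
  exact (key _ (by omega)).2

lemma push_lemma (k l : ℤ → ℤ) (hk : ∀ n : ℤ, 2 ≤ k n) (hl : ∀ n : ℤ, 2 ≤ l n)
    {M : ℤ} (hM : 0 ≤ M) {j : ℤ} (h1 : -M ≤ j) (h2 : j ≤ M) {B : ℤ} (hB : 1 ≤ B) :
    ∃ N : ℤ, 1 ≤ N ∧ ∃ E : ℤ, B ≤ E ∧ ∃ q : Gtil k l,
      (q ∈ Subsemigroup.closure (aGenSet k l) ∨ q = 1) ∧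
      gg k l M ^ N = gg k l j ^ E * q := by
  have key : ∀ d : ℕ, ∀ t : ℤ, -M ≤ t → t = M - d → ∀ B : ℤ, 1 ≤ B →
      ∃ N : ℤ, 1 ≤ N ∧ ∃ E : ℤ, B ≤ E ∧ ∃ q : Gtil k l,
        (q ∈ Subsemigroup.closure (aGenSet k l) ∨ q = 1) ∧
        gg k l M ^ N = gg k l t ^ E * q := by
    intro d
    induction d with
    | zero =>
      intro t _ ht B hB
      refine ⟨B, hB, B, le_refl _, 1, Or.inr rfl, ?_⟩
      rw [show t = M by omega, mul_one]
    | succ d ih =>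
      intro t ht0 ht B hB
      have ht1 : t + 1 = M - d := by push_cast at ht ⊢; omega
      obtain ⟨N, hN, E, hE, q, hq, heq⟩ :=
        ih (t + 1) (by omega) ht1 ((B + 1) * l (t + 1))
          (by have := hl (t + 1); nlinarith)
      set L := l (t + 1) with hL
      set K := k (t + 1) with hK
      have hL2 : 2 ≤ L := hl (t + 1)
      have hK2 : 2 ≤ K := hk (t + 1)
      set c := E / L with hc
      set r := E % L with hr
      have hdiv : L * c + r = E := Int.mul_ediv_add_emod E L
      have hr0 : 0 ≤ r := Int.emod_nonneg E (by omega)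
      have hrL : r < L := Int.emod_lt_of_pos E (by omega)
      have hcB : B + 1 ≤ c := by nlinarith
      have hrel : gg k l t ^ K = gg k l (t + 1) ^ L := by
        have := gg_rel k l (t + 1)
        rwa [show t + 1 - 1 = t by ring] at this
      have hstep : gg k l (t + 1) ^ (L * c) = gg k l t ^ (K * c) := by
        rw [zpow_mul, ← hrel, ← zpow_mul]
      have hsplit : gg k l (t + 1) ^ E = gg k l t ^ (K * c) * gg k l (t + 1) ^ r := by
        rw [← hdiv, zpow_add, hstep]
      refine ⟨N, hN, K * c, by nlinarith, gg k l (t + 1) ^ r * q, ?_, ?_⟩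
      · rcases eq_or_lt_of_le hr0 with h0 | hpos
        · rw [← h0, zpow_zero, one_mul]
          exact hq
        · have hgr : gg k l (t + 1) ^ r ∈ Subsemigroup.closure (aGenSet k l) :=
            cl_zpow k l (gg_mem_cl k l hk hM (by omega) (by omega)) (by omega)
          left
          rcases hq with hcl | hone
          · exact Subsemigroup.mul_mem _ hgr hcl
          · rw [hone, mul_one]; exact hgr
      · rw [heq, hsplit, mul_assoc]
  exact key (M - j).toNat j h1 (by omega) B hB

theorem stmt19 (k l : ℤ → ℤ) (hk : ∀ n : ℤ, 2 ≤ k n) (hl : ∀ n : ℤ, 2 ≤ l n)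
    (m : ℤ) (hm : 0 ≤ m) :
    ∀ C : Subgroup (Gtil k l),
      IsConvexIn (Gsub k l (m + 1)) (Ptil k l ∩ (Gsub k l (m + 1) : Set (Gtil k l))) C →
      aElt k l m m ∈ C →
      (∀ j : ℤ, -m - 1 ≤ j → j ≤ m + 1 → gg k l j ∈ C) ∧
      gg k l (m + 1) ∈ C ∧
      Subgroup.closure {gg k l (m + 1) ^ k (m + 2)} ≤ C := by
  intro C hC hA
  obtain ⟨hCH, hconv⟩ := hC
  have hM1 : (0:ℤ) ≤ m + 1 := by omega
  -- the key identity
  have h3 : gg k l m ^ (-(k (m+1))) = gg k l (m+1) ^ (-(l (m+1))) := by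
    have := gg_rel k l (m + 1)
    rw [show m + 1 - 1 = m by ring] at this
    rw [zpow_neg, zpow_neg, this]
  have hsucc := aElt_succ k l m (m+1) (by omega)
  have hshift := aElt_shift k l m m (by omega)
  have idA : aElt k l m m = gg k l (-(m+1)) ^ (k (-m) - 1) * aElt k l (m+1) (m+1)
      * gg k l (m+1) ^ (l (m+1) - 1) := by
    rw [hsucc, hshift, h3]
    rw [show l (m+1) - 1 = -(-(l (m+1))) - 1 by ring]
    group
  -- membership tools
  have hggGsub : ∀ j : ℤ, -(m+1) ≤ j → j ≤ m+1 → gg k l j ∈ Gsub k l (m+1) :=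
    fun j hj1 hj2 => gg_mem_Gsub k l hj1 hj2
  have hggcl : ∀ j : ℤ, -(m+1) ≤ j → j ≤ m+1 →
      gg k l j ∈ Subsemigroup.closure (aGenSet k l) :=
    fun j hj1 hj2 => gg_mem_cl k l hk hM1 hj1 hj2
  have haElt_gen : aElt k l (m+1) (m+1) ∈ aGenSet k l :=
    aElt_mem_aGenSet k l hM1 (by omega) (le_refl _)
  have haElt_cl : aElt k l (m+1) (m+1) ∈ Subsemigroup.closure (aGenSet k l) :=
    Subsemigroup.subset_closure haElt_gen
  have haElt_Gsub : aElt k l (m+1) (m+1) ∈ Gsub k l (m+1) :=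
    aElt_mem_Gsub k l hM1 (by omega) (le_refl _)
  -- x1
  have hx1cl : gg k l (-(m+1)) ^ (k (-m) - 1) ∈ Subsemigroup.closure (aGenSet k l) :=
    cl_zpow k l (hggcl _ (le_refl _) (by omega)) (by have := hk (-m); omega)
  have hx1Gsub : gg k l (-(m+1)) ^ (k (-m) - 1) ∈ Gsub k l (m+1) :=
    zpow_mem (hggGsub _ (le_refl _) (by omega)) _
  have hx1C : gg k l (-(m+1)) ^ (k (-m) - 1) ∈ C := by
    apply hconv 1 C.one_mem (aElt k l m m) hA _ hx1Gsub
    · rw [inv_one, one_mul]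
      exact Set.mem_union_left _ ⟨hx1cl, hx1Gsub⟩
    · have hval : (gg k l (-(m+1)) ^ (k (-m) - 1))⁻¹ * aElt k l m m
          = aElt k l (m+1) (m+1) * gg k l (m+1) ^ (l (m+1) - 1) := by
        rw [idA]; group
      rw [hval]
      refine Set.mem_union_left _ ⟨?_, ?_⟩
      · exact Subsemigroup.mul_mem _ haElt_cl
          (cl_zpow k l (hggcl _ (by omega) (le_refl _)) (by have := hl (m+1); omega))
      · exact mul_mem haElt_Gsub (zpow_mem (hggGsub _ (by omega) (le_refl _)) _)
  -- x2
  have hx2cl : gg k l (-(m+1)) ^ (k (-m) - 1) * aElt k l (m+1) (m+1)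
      ∈ Subsemigroup.closure (aGenSet k l) := Subsemigroup.mul_mem _ hx1cl haElt_cl
  have hx2Gsub : gg k l (-(m+1)) ^ (k (-m) - 1) * aElt k l (m+1) (m+1) ∈ Gsub k l (m+1) :=
    mul_mem hx1Gsub haElt_Gsub
  have hx2C : gg k l (-(m+1)) ^ (k (-m) - 1) * aElt k l (m+1) (m+1) ∈ C := by
    apply hconv 1 C.one_mem (aElt k l m m) hA _ hx2Gsub
    · rw [inv_one, one_mul]
      exact Set.mem_union_left _ ⟨hx2cl, hx2Gsub⟩
    · have hval : (gg k l (-(m+1)) ^ (k (-m) - 1) * aElt k l (m+1) (m+1))⁻¹ * aElt k l m m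
          = gg k l (m+1) ^ (l (m+1) - 1) := by
        rw [idA]; group
      rw [hval]
      refine Set.mem_union_left _ ⟨?_, ?_⟩
      · exact cl_zpow k l (hggcl _ (by omega) (le_refl _)) (by have := hl (m+1); omega)
      · exact zpow_mem (hggGsub _ (by omega) (le_refl _)) _
  -- x3
  have hx3C : gg k l (-(m+1)) ^ (k (-m) - 1) * aElt k l (m+1) (m+1) * gg k l (m+1) ∈ C := by
    apply hconv 1 C.one_mem (aElt k l m m) hA _
      (mul_mem hx2Gsub (hggGsub _ (by omega) (le_refl _)))
    · rw [inv_one, one_mul]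
      exact Set.mem_union_left _
        ⟨Subsemigroup.mul_mem _ hx2cl (hggcl _ (by omega) (le_refl _)),
         mul_mem hx2Gsub (hggGsub _ (by omega) (le_refl _))⟩
    · have hval : (gg k l (-(m+1)) ^ (k (-m) - 1) * aElt k l (m+1) (m+1) * gg k l (m+1))⁻¹
          * aElt k l m m = gg k l (m+1) ^ (l (m+1) - 2) := by
        rw [idA, show l (m+1) - 2 = l (m+1) - 1 - 1 by ring]
        group
      rw [hval]
      rcases eq_or_lt_of_le (by have := hl (m+1); omega : (0:ℤ) ≤ l (m+1) - 2) with h0 | hpos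
      · rw [← h0, zpow_zero]
        exact Set.mem_union_right _ rfl
      · refine Set.mem_union_left _ ⟨?_, ?_⟩
        · exact cl_zpow k l (hggcl _ (by omega) (le_refl _)) (by omega)
        · exact zpow_mem (hggGsub _ (by omega) (le_refl _)) _
  have hgMC : gg k l (m+1) ∈ C := by
    have := mul_mem (inv_mem hx2C) hx3C
    rwa [inv_mul_cancel_left] at this
  -- all generators
  have hgj : ∀ j : ℤ, -(m+1) ≤ j → j ≤ m+1 → gg k l j ∈ C := by
    intro j hj1 hj2
    obtain ⟨N, hN, E, hE, q, hq, heq⟩ :=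
      push_lemma k l hk hl hM1 hj1 hj2 (le_refl (1:ℤ))
    apply hconv 1 C.one_mem (gg k l (m+1) ^ N) (zpow_mem hgMC N) _ (hggGsub j hj1 hj2)
    · rw [inv_one, one_mul]
      exact Set.mem_union_left _ ⟨hggcl j hj1 hj2, hggGsub j hj1 hj2⟩
    · have hval : (gg k l j)⁻¹ * gg k l (m+1) ^ N = gg k l j ^ (E - 1) * q := by
        rw [heq, ← mul_assoc]
        congr 1
        rw [show E - 1 = -1 + E by ring, zpow_add, zpow_neg_one]
      have hGs : (gg k l j)⁻¹ * gg k l (m+1) ^ N ∈ Gsub k l (m+1) :=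
        mul_mem (inv_mem (hggGsub j hj1 hj2))
          (zpow_mem (hggGsub _ (by omega) (le_refl _)) _)
      rw [hval] at hGs ⊢
      rcases eq_or_lt_of_le (by omega : (0:ℤ) ≤ E - 1) with h0 | hpos
      · rw [← h0, zpow_zero, one_mul] at hGs ⊢
        rcases hq with hcl | hone
        · exact Set.mem_union_left _ ⟨hcl, hGs⟩
        · exact Set.mem_union_right _ hone
      · have hp : gg k l j ^ (E - 1) ∈ Subsemigroup.closure (aGenSet k l) :=
          cl_zpow k l (hggcl j hj1 hj2) (by omega)
        refine Set.mem_union_left _ ⟨?_, hGs⟩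
        rcases hq with hcl | hone
        · exact Subsemigroup.mul_mem _ hp hcl
        · rw [hone, mul_one]; exact hp
  refine ⟨fun j hj1 hj2 => hgj j (by omega) hj2, hgMC, ?_⟩
  rw [Subgroup.closure_le]
  intro x hx
  rw [Set.mem_singleton_iff] at hx
  rw [hx]
  exact SetLike.mem_coe.mpr (zpow_mem hgMC _)
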